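/- arXiv:2506.01354 — 10 statements merged into one kernel-verified Lean document; each statement's English description precedes it below -/
import Mathlib

section
/- Fix ω ∈ ℝ. Define the maps M, α, α⁻¹, Ω : ℝ³ → ℝ³ by M(x,y,z) = (x·cos ω − y·sin ω, x·sin ω + y·cos ω, z − x·y/2 + ((x² − y²)/4)·sin 2ω + (x·y/2)·cos 2ω), α(x,y,z) = (x, y, z + x·y/2), α⁻¹(x,y,z) = (x, y, z − x·y/2), and Ω(x,y,z) = (x·cos ω − y·sin ω, x·sin ω + y·cos ω, z). Then for every point p ∈ ℝ³ one has M(p) = α(Ω(α⁻¹(p))); i.e., the Nil rotation M about the z-axis through angle ω is conjugate, by the quadratic map α, to the Euclidean linear rotation Ω. -/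
open Real

/-- The Nil rotation about the z-axis through angle ω (formula (2.10)). -/
noncomputable def nilRotation (ω : ℝ) : ℝ × ℝ × ℝ → ℝ × ℝ × ℝ :=
  fun p =>
    (p.1 * cos ω - p.2.1 * sin ω,
     p.1 * sin ω + p.2.1 * cos ω,
     p.2.2 - p.1 * p.2.1 / 2 + ((p.1 ^ 2 - p.2.1 ^ 2) / 4) * sin (2 * ω)
       + (p.1 * p.2.1 / 2) * cos (2 * ω))

/-- The quadratic map α. -/
noncomputable def nilAlpha : ℝ × ℝ × ℝ → ℝ × ℝ × ℝ :=
  fun p => (p.1, p.2.1, p.2.2 + p.1 * p.2.1 / 2)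

/-- The quadratic map α⁻¹. -/
noncomputable def nilAlphaInv : ℝ × ℝ × ℝ → ℝ × ℝ × ℝ :=
  fun p => (p.1, p.2.1, p.2.2 - p.1 * p.2.1 / 2)

/-- The Euclidean linear rotation Ω about the z-axis. -/
noncomputable def linRotation (ω : ℝ) : ℝ × ℝ × ℝ → ℝ × ℝ × ℝ :=
  fun p => (p.1 * cos ω - p.2.1 * sin ω, p.1 * sin ω + p.2.1 * cos ω, p.2.2)

/-- The left side is the `xy/2` that `α` adds back after `Ω`; the right side is the correction
term of `M` beyond the `-xy/2` contributed by `α⁻¹`. -/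
theorem rotated_coords_mul_div_two (ω x y : ℝ) :
    (x * cos ω - y * sin ω) * (x * sin ω + y * cos ω) / 2
      = ((x ^ 2 - y ^ 2) / 4) * sin (2 * ω) + (x * y / 2) * cos (2 * ω) := by
  rw [sin_two_mul, cos_two_mul']
  ring

/-- The Nil rotation `M` about the z-axis through angle ω is conjugate, by the
quadratic map α, to the Euclidean linear rotation Ω:  `M = α ∘ Ω ∘ α⁻¹`. -/
theorem nilRotation_conjugate_linear (ω : ℝ) :
    ∀ p : ℝ × ℝ × ℝ, nilRotation ω p = nilAlpha (linRotation ω (nilAlphaInv p)) := by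
  rintro ⟨x, y, z⟩
  simp only [nilRotation, nilAlpha, nilAlphaInv, linRotation, Prod.mk.injEq]
  refine ⟨trivial, trivial, ?_⟩
  rw [add_assoc, ← rotated_coords_mul_div_two]
end

section
/- Let θ, φ ∈ ℝ with sin θ ≠ 0, and let (x(t), y(t), z(t)) = (−(cos θ/sin θ)·cos φ·(e^{−t sin θ} − 1), (cos θ/sin θ)·sin φ·(e^{t sin θ} − 1), t·sin θ) be the Sol translation curve through the origin with parameters (θ, φ). Then for all t ∈ ℝ the orthogonal projection (x(t), z(t)) onto the [x,z] coordinate plane satisfies e^{−z(t)}·cos θ·cos φ = cos θ·cos φ − sin θ·x(t); equivalently, when cos θ·cos φ ≠ 0, the projected curve satisfies the equation z = −log(1 − x·sin θ/(cos θ·cos φ)). -/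
open Real

theorem neg_log_one_sub_div_of_exp_neg_mul_eq {a b z : ℝ} (ha : a ≠ 0)
    (h : exp (-z) * a = a - b) : z = -log (1 - b / a) := by
  have hexp : 1 - b / a = exp (-z) := by
    rw [one_sub_div ha, ← h, mul_div_cancel_right₀ _ ha]
  rw [hexp, log_exp, neg_neg]

/-- The `[x,z]`-projection of the Sol translation curve through the origin with
parameters `(θ, φ)` satisfies `e^{−z}·cos θ·cos φ = cos θ·cos φ − sin θ·x`;
equivalently, when `cos θ·cos φ ≠ 0`, it satisfies
`z = −log(1 − x·sin θ/(cos θ·cos φ))`. -/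
theorem sol_translation_curve_xz_projection
    (θ φ : ℝ) (hθ : sin θ ≠ 0)
    (x z : ℝ → ℝ)
    (hx : ∀ t : ℝ, x t = -(cos θ / sin θ) * cos φ * (exp (-(t * sin θ)) - 1))
    (hz : ∀ t : ℝ, z t = t * sin θ) :
    ∀ t : ℝ,
      exp (-(z t)) * (cos θ * cos φ) = cos θ * cos φ - sin θ * x t ∧
      (cos θ * cos φ ≠ 0 →
        z t = -Real.log (1 - x t * sin θ / (cos θ * cos φ))) := by
  intro t
  have hxz : exp (-(z t)) * (cos θ * cos φ) = cos θ * cos φ - sin θ * x t := by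
    rw [hx, hz]
    field_simp
    ring
  refine ⟨hxz, fun hc => neg_log_one_sub_div_of_exp_neg_mul_eq hc ?_⟩
  rw [hxz, mul_comm (x t)]
end

section
/- Let θ, φ ∈ ℝ with sin θ ≠ 0, and let (x(t), z(t)) = (−(cos θ/sin θ)·cos φ·(e^{−t sin θ} − 1), t·sin θ) be the orthogonal projection onto the [x,z] plane of the Sol translation curve through the origin with parameters (θ, φ). Then for all t ∈ ℝ the image under the map m(x,z) = (x, e^{−z}) satisfies (x(t), e^{−z(t)}) = (0, 1) + λ(t)·(cos θ·cos φ, −sin θ), where λ(t) = (1 − e^{−t sin θ})/sin θ. In particular, all points (x(t), e^{−z(t)}) lie on a single Euclidean straight line through (0,1), so the m-image of the projected Sol translation curve is a Euclidean straight segment. -/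
open Real

/-- The image under `m(x,z) = (x, e^{−z})` of the `[x,z]`-projection of the Sol
translation curve through the origin with parameters `(θ, φ)`, `sin θ ≠ 0`, is
a Euclidean straight segment: it lies on the line through `(0,1)` with direction
`(cos θ·cos φ, −sin θ)`, the point at arc-length parameter `t` corresponding to
the line parameter `λ(t) = (1 − e^{−t·sin θ})/sin θ`. -/
theorem sol_translation_curve_m_image_is_line
    (θ φ : ℝ) (hθ : sin θ ≠ 0)
    (x z : ℝ → ℝ)
    (hx : ∀ t : ℝ, x t = -(cos θ / sin θ) * cos φ * (exp (-(t * sin θ)) - 1))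
    (hz : ∀ t : ℝ, z t = t * sin θ) :
    ∀ t : ℝ,
      ((x t, exp (-(z t))) : ℝ × ℝ) =
        ((0 : ℝ), (1 : ℝ)) +
          ((1 - exp (-(t * sin θ))) / sin θ) • ((cos θ * cos φ, -sin θ) : ℝ × ℝ) := by
  intro t
  ext
  · simp only [hx, Prod.fst_add, Prod.smul_fst, smul_eq_mul]
    ring
  · simp only [hz, Prod.snd_add, Prod.smul_snd, smul_eq_mul]
    field_simp
    ring
end

section
/- Let θ, φ ∈ ℝ with sin θ ≠ 0, let (x(t), z(t)) = (−(cos θ/sin θ)·cos φ·(e^{−t sin θ} − 1), t·sin θ), and set M(s) = (x(s), e^{−z(s)}) ∈ ℝ² (the m-image of the [x,z]-projection of the Sol translation curve through the origin). Then for all 0 < s₁ < s₂ the Euclidean simple ratio of the collinear points M(0) = (0,1), M(s₁), M(s₂) satisfies dist(M(0), M(s₁)) / dist(M(s₁), M(s₂)) = (1 − e^{−s₁ sin θ}) / (e^{−s₁ sin θ} − e^{−s₂ sin θ}); i.e., the Euclidean simple ratio of the m-images equals the Sol simple ratio of the corresponding points on the translation curve. -/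
/-! The `m`-image lies on the line `x = c (y - 1)`, `c = -cot θ cos φ`, so Euclidean distances
along it are `√(c² + 1)` times differences of the height `y = e^{-s sin θ}`. The height is strictly
monotone in `s`, so both differences have the same sign and the absolute values drop out. -/

open Real

/-- Euclidean distance in the plane ℝ². -/
noncomputable def euclDist2 (a b : ℝ × ℝ) : ℝ :=
  Real.sqrt ((a.1 - b.1) ^ 2 + (a.2 - b.2) ^ 2)

theorem euclDist2_mk_mul_sub (c d u v : ℝ) :
    euclDist2 (c * (u - d), u) (c * (v - d), v) = √(c ^ 2 + 1) * |u - v| := by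
  have hsq : (c * (u - d) - c * (v - d)) ^ 2 + (u - v) ^ 2 = (c ^ 2 + 1) * (u - v) ^ 2 := by
    ring
  rw [euclDist2, hsq, sqrt_mul (by positivity), sqrt_sq_eq_abs]

theorem sub_div_sub_pos_of_strictMono_or_strictAnti {α : Type*} [LinearOrder α] {f : α → ℝ}
    (hf : StrictMono f ∨ StrictAnti f) {a b c : α} (hab : a < b) (hbc : b < c) :
    0 < (f a - f b) / (f b - f c) := by
  rcases hf with hf | hf
  · exact div_pos_of_neg_of_neg (sub_neg.2 (hf hab)) (sub_neg.2 (hf hbc))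
  · exact div_pos (sub_pos.2 (hf hab)) (sub_pos.2 (hf hbc))

theorem strictMono_or_strictAnti_exp_neg_mul {k : ℝ} (hk : k ≠ 0) :
    StrictMono (fun t => exp (-(t * k))) ∨ StrictAnti (fun t => exp (-(t * k))) := by
  rcases hk.lt_or_gt with hk | hk
  · exact Or.inl (exp_strictMono.comp fun s t hst => by nlinarith)
  · exact Or.inr (exp_strictMono.comp_strictAnti fun s t hst => by nlinarith)

/-- For the `m`-image `M(s) = (x(s), e^{−z(s)})` of the `[x,z]`-projection of a Sol
translation curve through the origin, the Euclidean simple ratio of the collinear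
points `M(0) = (0,1)`, `M(s₁)`, `M(s₂)` (for `0 < s₁ < s₂`) equals
`(1 − e^{−s₁ sin θ})/(e^{−s₁ sin θ} − e^{−s₂ sin θ})`, the Sol simple ratio of the
corresponding points of the translation curve. -/
theorem sol_simple_ratio_via_m_image
    (θ φ : ℝ) (hθ : sin θ ≠ 0)
    (x z : ℝ → ℝ)
    (hx : ∀ t : ℝ, x t = -(cos θ / sin θ) * cos φ * (exp (-(t * sin θ)) - 1))
    (hz : ∀ t : ℝ, z t = t * sin θ)
    (M : ℝ → ℝ × ℝ) (hM : ∀ s : ℝ, M s = (x s, exp (-(z s))))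
    (s₁ s₂ : ℝ) (hs₁ : 0 < s₁) (hs₂ : s₁ < s₂) :
    euclDist2 (M 0) (M s₁) / euclDist2 (M s₁) (M s₂) =
      (1 - exp (-(s₁ * sin θ))) / (exp (-(s₁ * sin θ)) - exp (-(s₂ * sin θ))) := by
  set c := -(cos θ / sin θ) * cos φ
  have hM_line : ∀ s, M s = (c * (exp (-(s * sin θ)) - 1), exp (-(s * sin θ))) := by
    intro s
    rw [hM, hx, hz]
  have hratio_pos := sub_div_sub_pos_of_strictMono_or_strictAnti
    (strictMono_or_strictAnti_exp_neg_mul hθ) hs₁ hs₂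
  rw [zero_mul, neg_zero, exp_zero] at hratio_pos
  rw [hM_line, hM_line, hM_line, euclDist2_mk_mul_sub, euclDist2_mk_mul_sub,
    mul_div_mul_left _ _ (by positivity), ← abs_div, zero_mul, neg_zero,
    exp_zero, abs_of_pos hratio_pos]
end

section
/- (Ceva's theorem for translation triangles in Sol.) Let A₀, A₁, A₂ ∈ ℝ³ be points of Sol such that Π(A₀), Π(A₁), Π(A₂) are affinely independent in ℝ², where Π(a,b,c) = (a, e^{−c}). For (i,j) ∈ {(0,1),(1,2),(2,0)} let Γ_{ij} be a Sol translation curve with parameters (θ_{ij}, φ_{ij}), sin θ_{ij} ≠ 0, with Γ_{ij}(0) = A_i and Γ_{ij}(L_{ij}) = A_j for some L_{ij} > 0. Let P = Γ₀₁(s_P), Q = Γ₁₂(s_Q), R = Γ₂₀(s_R) with s_P ∉ {0, L₀₁}, s_Q ∉ {0, L₁₂}, s_R ∉ {0, L₂₀}. Suppose there exists a point T^m ∈ ℝ², not on any of the three Euclidean lines through pairs Π(A_i), Π(A_j), lying on the Euclidean line through Π(A₀) and Π(Q), on the line through Π(A₁) and Π(R), and on the line through Π(A₂) and Π(P) (this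 is the Π-image of the condition that the connecting curves A₀T, A₁T, A₂T of Definition 3.21 pass through a common point T of the translation-triangle surface). Then σ(s_P, L₀₁; sin θ₀₁) · σ(s_Q, L₁₂; sin θ₁₂) · σ(s_R, L₂₀; sin θ₂₀) = 1, where σ(s, L; k) = (1 − e^{−s k})/(e^{−s k} − e^{−L k}) is the Sol simple ratio. -/
open Real

/-- The Sol translation curve starting at `S = (p,q,r)` with parameters `(θ, φ)`,
parametrized by translation arc length. -/
noncomputable def solCurve (S : ℝ × ℝ × ℝ) (θ φ : ℝ) : ℝ → ℝ × ℝ × ℝ :=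
  fun t =>
    (S.1 + exp (-S.2.2) * (-(cos θ / sin θ) * cos φ * (exp (-(t * sin θ)) - 1)),
     S.2.1 + exp S.2.2 * ((cos θ / sin θ) * sin φ * (exp (t * sin θ) - 1)),
     S.2.2 + t * sin θ)

/-- The composition `Π(a,b,c) = (a, e^{−c})` of the orthogonal projection onto the
`[x,z]` plane with the map `m` to the upper half-plane. -/
noncomputable def solProj : ℝ × ℝ × ℝ → ℝ × ℝ := fun S => (S.1, exp (-S.2.2))

/-- The Sol simple ratio `σ(s, L; k) = (1 − e^{−s·k})/(e^{−s·k} − e^{−L·k})` of the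
points `Γ(0)`, `Γ(s)`, `Γ(L)` of a translation curve with `k = sin θ`. -/
noncomputable def solRatio (s L k : ℝ) : ℝ :=
  (1 - exp (-(s * k))) / (exp (-(s * k)) - exp (-(L * k)))

/-! Along a Sol translation curve the projection `Π ∘ Γ` is affine in `e^{-t sin θ}`, so `Π Γ(s)`
divides the segment from `Π Γ(0)` to `Π Γ(L)` at `r = (1 - e^{-s k})/(1 - e^{-L k})` (`k = sin θ`),
and the Sol simple ratio is exactly the Euclidean ratio `r / (1 - r)`. The theorem is therefore
Ceva's theorem for the projected triangle in the plane. -/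

open AffineMap

noncomputable def solLineParam (s L k : ℝ) : ℝ :=
  (1 - exp (-(s * k))) / (1 - exp (-(L * k)))

theorem one_sub_exp_neg_ne_zero {x : ℝ} (hx : x ≠ 0) : 1 - exp (-x) ≠ 0 := by
  rw [sub_ne_zero, ne_comm, Ne, exp_eq_one_iff, neg_eq_zero]
  exact hx

theorem solLineParam_ne_zero {s L k : ℝ} (hs : s * k ≠ 0) (hL : L * k ≠ 0) :
    solLineParam s L k ≠ 0 :=
  div_ne_zero (one_sub_exp_neg_ne_zero hs) (one_sub_exp_neg_ne_zero hL)

theorem solLineParam_mul_exp_sub_one {s L k : ℝ} (hL : L * k ≠ 0) :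
    solLineParam s L k * (exp (-(L * k)) - 1) = exp (-(s * k)) - 1 := by
  rw [solLineParam, div_mul_eq_mul_div, div_eq_iff (one_sub_exp_neg_ne_zero hL)]
  ring

theorem solRatio_eq_solLineParam {s L k : ℝ} (hL : L * k ≠ 0) :
    solRatio s L k = solLineParam s L k / (1 - solLineParam s L k) := by
  have hL' := one_sub_exp_neg_ne_zero hL
  rw [solRatio, solLineParam, one_sub_div hL', div_div_div_cancel_right₀ hL']
  ring_nf

theorem solProj_solCurve_eq_lineMap {A : ℝ × ℝ × ℝ} {θ φ L : ℝ} (hL : L * sin θ ≠ 0) (s : ℝ) :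
    solProj (solCurve A θ φ s) =
      lineMap (solProj A) (solProj (solCurve A θ φ L)) (solLineParam s L (sin θ)) := by
  have key := solLineParam_mul_exp_sub_one (s := s) hL
  simp only [solProj, solCurve, lineMap_apply_module', Prod.ext_iff, Prod.fst_add, Prod.snd_add,
    Prod.smul_fst, Prod.smul_snd, Prod.fst_sub, Prod.snd_sub, smul_eq_mul, neg_add, exp_add]
  constructor
  · linear_combination (-(exp (-A.2.2) * (-(cos θ / sin θ) * cos φ))) * key
  · linear_combination (-exp (-A.2.2)) * key

theorem sol_ceva_general
    (A₀ A₁ A₂ : ℝ × ℝ × ℝ)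
    (hind : AffineIndependent ℝ ![solProj A₀, solProj A₁, solProj A₂])
    (θ₀₁ φ₀₁ θ₁₂ φ₁₂ θ₂₀ φ₂₀ : ℝ)
    (hθ₀₁ : sin θ₀₁ ≠ 0) (hθ₁₂ : sin θ₁₂ ≠ 0) (hθ₂₀ : sin θ₂₀ ≠ 0)
    (L₀₁ L₁₂ L₂₀ : ℝ) (hL₀₁ : 0 < L₀₁) (hL₁₂ : 0 < L₁₂) (hL₂₀ : 0 < L₂₀)
    (hA₁ : solCurve A₀ θ₀₁ φ₀₁ L₀₁ = A₁)
    (hA₂ : solCurve A₁ θ₁₂ φ₁₂ L₁₂ = A₂)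
    (hA₀ : solCurve A₂ θ₂₀ φ₂₀ L₂₀ = A₀)
    (sP sQ sR : ℝ)
    (hsP0 : sP ≠ 0) (hsQ0 : sQ ≠ 0) (hsR0 : sR ≠ 0)
    (P Q R : ℝ × ℝ × ℝ)
    (hP : P = solCurve A₀ θ₀₁ φ₀₁ sP)
    (hQ : Q = solCurve A₁ θ₁₂ φ₁₂ sQ)
    (hR : R = solCurve A₂ θ₂₀ φ₂₀ sR)
    (T : ℝ × ℝ)
    (h0 : T ∈ affineSpan ℝ {solProj A₀, solProj Q})
    (h1 : T ∈ affineSpan ℝ {solProj A₁, solProj R})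
    (h2 : T ∈ affineSpan ℝ {solProj A₂, solProj P}) :
    solRatio sP L₀₁ (sin θ₀₁) * solRatio sQ L₁₂ (sin θ₁₂) * solRatio sR L₂₀ (sin θ₂₀) = 1 := by
  have h₀₁ := mul_ne_zero hL₀₁.ne' hθ₀₁
  have h₁₂ := mul_ne_zero hL₁₂.ne' hθ₁₂
  have h₂₀ := mul_ne_zero hL₂₀.ne' hθ₂₀
  rw [hP, solProj_solCurve_eq_lineMap h₀₁, hA₁] at h2
  rw [hQ, solProj_solCurve_eq_lineMap h₁₂, hA₂] at h0
  rw [hR, solProj_solCurve_eq_lineMap h₂₀, hA₀] at h1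
  have hceva := Affine.Triangle.prod_div_one_sub_eq_one_of_mem_line_point_lineMap
    (t := ⟨_, hind⟩) (p' := T)
    (r := ![solLineParam sQ L₁₂ (sin θ₁₂), solLineParam sR L₂₀ (sin θ₂₀),
      solLineParam sP L₀₁ (sin θ₀₁)])
    (by
      intro i
      fin_cases i
      exacts [solLineParam_ne_zero (mul_ne_zero hsQ0 hθ₁₂) h₁₂,
        solLineParam_ne_zero (mul_ne_zero hsR0 hθ₂₀) h₂₀,
        solLineParam_ne_zero (mul_ne_zero hsP0 hθ₀₁) h₀₁])
    (by intro i; fin_cases i <;> simpa)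
  simp only [Fin.prod_univ_three, Matrix.cons_val] at hceva
  rw [solRatio_eq_solLineParam h₀₁, solRatio_eq_solLineParam h₁₂, solRatio_eq_solLineParam h₂₀]
  linear_combination hceva

/-- **Ceva's theorem for translation triangles in Sol.** -/
theorem sol_ceva
    (A₀ A₁ A₂ : ℝ × ℝ × ℝ)
    (hind : AffineIndependent ℝ ![solProj A₀, solProj A₁, solProj A₂])
    (θ₀₁ φ₀₁ θ₁₂ φ₁₂ θ₂₀ φ₂₀ : ℝ)
    (hθ₀₁ : sin θ₀₁ ≠ 0) (hθ₁₂ : sin θ₁₂ ≠ 0) (hθ₂₀ : sin θ₂₀ ≠ 0)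
    (L₀₁ L₁₂ L₂₀ : ℝ) (hL₀₁ : 0 < L₀₁) (hL₁₂ : 0 < L₁₂) (hL₂₀ : 0 < L₂₀)
    (hA₁ : solCurve A₀ θ₀₁ φ₀₁ L₀₁ = A₁)
    (hA₂ : solCurve A₁ θ₁₂ φ₁₂ L₁₂ = A₂)
    (hA₀ : solCurve A₂ θ₂₀ φ₂₀ L₂₀ = A₀)
    (sP sQ sR : ℝ)
    (hsP0 : sP ≠ 0) (hsP1 : sP ≠ L₀₁) (hsQ0 : sQ ≠ 0) (hsQ1 : sQ ≠ L₁₂)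
    (hsR0 : sR ≠ 0) (hsR1 : sR ≠ L₂₀)
    (P Q R : ℝ × ℝ × ℝ)
    (hP : P = solCurve A₀ θ₀₁ φ₀₁ sP)
    (hQ : Q = solCurve A₁ θ₁₂ φ₁₂ sQ)
    (hR : R = solCurve A₂ θ₂₀ φ₂₀ sR)
    (T : ℝ × ℝ)
    (hT01 : T ∉ affineSpan ℝ {solProj A₀, solProj A₁})
    (hT12 : T ∉ affineSpan ℝ {solProj A₁, solProj A₂})
    (hT20 : T ∉ affineSpan ℝ {solProj A₂, solProj A₀})
    (h0 : T ∈ affineSpan ℝ {solProj A₀, solProj Q})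
    (h1 : T ∈ affineSpan ℝ {solProj A₁, solProj R})
    (h2 : T ∈ affineSpan ℝ {solProj A₂, solProj P}) :
    solRatio sP L₀₁ (sin θ₀₁) * solRatio sQ L₁₂ (sin θ₁₂) * solRatio sR L₂₀ (sin θ₂₀) = 1 :=
  sol_ceva_general A₀ A₁ A₂ hind θ₀₁ φ₀₁ θ₁₂ φ₁₂ θ₂₀ φ₂₀ hθ₀₁ hθ₁₂ hθ₂₀ L₀₁ L₁₂ L₂₀ hL₀₁ hL₁₂ hL₂₀
    hA₁ hA₂ hA₀ sP sQ sR hsP0 hsQ0 hsR0 P Q R hP hQ hR T h0 h1 h2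
end

section
/- (Menelaus' theorem for translation triangles in Sol.) Let A₀, A₁, A₂ ∈ ℝ³ be points of Sol such that Π(A₀), Π(A₁), Π(A₂) are affinely independent in ℝ², where Π(a,b,c) = (a, e^{−c}). For (i,j) ∈ {(0,1),(1,2),(2,0)} let Γ_{ij} be a Sol translation curve with parameters (θ_{ij}, φ_{ij}), sin θ_{ij} ≠ 0, with Γ_{ij}(0) = A_i and Γ_{ij}(L_{ij}) = A_j for some L_{ij} > 0. Let P = Γ₀₁(s_P), Q = Γ₁₂(s_Q), R = Γ₂₀(s_R) with s_P ∉ {0, L₀₁}, s_Q ∉ {0, L₁₂}, s_R ∉ {0, L₂₀}. If Π(P), Π(Q), Π(R) lie on a common Euclidean straight line in ℝ² which does not pass through any of Π(A₀), Π(A₁), Π(A₂), then σ(s_P, L₀₁; sin θ₀₁) · σ(s_Q, L₁₂; sin θ₁₂) · σ(s_R, L₂₀; sin θ₂₀) = −1, where σ(s, L; k) = (1 − e^{−s k})/(e^{−s k} − e^{−L k}) is the Sol simple ratio. -/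
open Real

/-! `Π` maps the translation curve from `S` onto the line `u ↦ Π S + (u - 1) • v`, where
`u = e^{-t sin θ}`, and the Sol simple ratio is exactly the affine ratio `(1 - u_s)/(u_s - u_L)`
of the parameters `1, u_s, u_L`. So if `f` is an affine function cutting out the transversal,
each side contributes `-f(Π Aᵢ) / f(Π Aⱼ)`, and the three factors telescope to `-1`. -/

theorem solProj_solCurve (S : ℝ × ℝ × ℝ) (θ φ t : ℝ) :
    solProj (solCurve S θ φ t) =
      (exp (-(t * sin θ)) - 1) • (-(exp (-S.2.2) * (cos θ / sin θ) * cos φ), exp (-S.2.2))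
        +ᵥ solProj S := by
  simp only [solProj, solCurve, vadd_eq_add, Prod.smul_mk, Prod.mk_add_mk, smul_eq_mul,
    neg_add, exp_add]
  ext <;> ring

theorem AffineMap.one_sub_div_sub_eq_neg_div {V P : Type*} [AddCommGroup V] [Module ℝ V]
    [AddTorsor V P] (f : P →ᵃ[ℝ] ℝ) (p : P) (v : V) {u w : ℝ}
    (hu : f ((u - 1) • v +ᵥ p) = 0) (hw : f ((w - 1) • v +ᵥ p) ≠ 0) :
    (1 - u) / (u - w) = -f p / f ((w - 1) • v +ᵥ p) := by
  simp only [AffineMap.map_vadd, map_smul, vadd_eq_add, smul_eq_mul] at hu hw ⊢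
  have huw : u - w ≠ 0 := fun h => hw (by linear_combination hu - f.linear v * h)
  rw [div_eq_div_iff huw hw]
  linear_combination (1 - w) * hu

theorem solRatio_eq_neg_div (f : ℝ × ℝ →ᵃ[ℝ] ℝ) (S : ℝ × ℝ × ℝ) (θ φ s L : ℝ)
    (hs : f (solProj (solCurve S θ φ s)) = 0) (hL : f (solProj (solCurve S θ φ L)) ≠ 0) :
    solRatio s L (sin θ) = -f (solProj S) / f (solProj (solCurve S θ φ L)) := by
  rw [solProj_solCurve] at hs hL ⊢
  exact f.one_sub_div_sub_eq_neg_div _ _ hs hL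

theorem exists_affineMap_mem_affineSpan_pair_iff {a b : ℝ × ℝ} (hab : a ≠ b) :
    ∃ f : ℝ × ℝ →ᵃ[ℝ] ℝ, ∀ p, p ∈ affineSpan ℝ {a, b} ↔ f p = 0 := by
  set d := b - a with hd_def
  have hd : d.1 ^ 2 + d.2 ^ 2 ≠ 0 := by
    intro h
    apply sub_ne_zero.mpr hab.symm
    ext <;> simp only [← hd_def, Prod.fst_zero, Prod.snd_zero] <;>
      nlinarith [sq_nonneg d.1, sq_nonneg d.2]
  let ℓ : ℝ × ℝ →ₗ[ℝ] ℝ := d.2 • LinearMap.fst ℝ ℝ ℝ - d.1 • LinearMap.snd ℝ ℝ ℝ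
  refine ⟨ℓ.toAffineMap - AffineMap.const ℝ _ (ℓ a), fun p => ?_⟩
  obtain ⟨w, rfl⟩ : ∃ w, p = w +ᵥ a := ⟨p -ᵥ a, (vsub_vadd p a).symm⟩
  rw [vadd_left_mem_affineSpan_pair]
  simp only [AffineMap.coe_sub, Pi.sub_apply, AffineMap.const_apply, LinearMap.coe_toAffineMap,
    vadd_eq_add, map_add, add_sub_cancel_right, vsub_eq_sub, ← hd_def, ℓ, LinearMap.sub_apply,
    LinearMap.smul_apply, LinearMap.fst_apply, LinearMap.snd_apply, smul_eq_mul]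
  constructor
  · rintro ⟨r, rfl⟩
    simp only [Prod.smul_fst, Prod.smul_snd, smul_eq_mul]
    ring
  · intro h
    refine ⟨(w.1 * d.1 + w.2 * d.2) / (d.1 ^ 2 + d.2 ^ 2), Prod.ext ?_ ?_⟩ <;>
      simp only [Prod.smul_fst, Prod.smul_snd, smul_eq_mul] <;> field_simp
    · linear_combination -d.2 * h
    · linear_combination d.1 * h

theorem sol_menelaus_general
    (A₀ A₁ A₂ : ℝ × ℝ × ℝ)
    (θ₀₁ φ₀₁ θ₁₂ φ₁₂ θ₂₀ φ₂₀ : ℝ)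
    (L₀₁ L₁₂ L₂₀ : ℝ)
    (hA₁ : solCurve A₀ θ₀₁ φ₀₁ L₀₁ = A₁)
    (hA₂ : solCurve A₁ θ₁₂ φ₁₂ L₁₂ = A₂)
    (hA₀ : solCurve A₂ θ₂₀ φ₂₀ L₂₀ = A₀)
    (sP sQ sR : ℝ)
    (P Q R : ℝ × ℝ × ℝ)
    (hP : P = solCurve A₀ θ₀₁ φ₀₁ sP)
    (hQ : Q = solCurve A₁ θ₁₂ φ₁₂ sQ)
    (hR : R = solCurve A₂ θ₂₀ φ₂₀ sR)
    (a b : ℝ × ℝ) (hab : a ≠ b)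
    (hPl : solProj P ∈ affineSpan ℝ {a, b})
    (hQl : solProj Q ∈ affineSpan ℝ {a, b})
    (hRl : solProj R ∈ affineSpan ℝ {a, b})
    (hA0l : solProj A₀ ∉ affineSpan ℝ {a, b})
    (hA1l : solProj A₁ ∉ affineSpan ℝ {a, b})
    (hA2l : solProj A₂ ∉ affineSpan ℝ {a, b}) :
    solRatio sP L₀₁ (sin θ₀₁) * solRatio sQ L₁₂ (sin θ₁₂) * solRatio sR L₂₀ (sin θ₂₀) = -1 := by
  obtain ⟨f, hf⟩ := exists_affineMap_mem_affineSpan_pair_iff hab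
  have h₀ : f (solProj A₀) ≠ 0 := mt (hf _).2 hA0l
  have h₁ : f (solProj A₁) ≠ 0 := mt (hf _).2 hA1l
  have h₂ : f (solProj A₂) ≠ 0 := mt (hf _).2 hA2l
  subst hP hQ hR
  have e₀₁ := solRatio_eq_neg_div f A₀ θ₀₁ φ₀₁ sP L₀₁ ((hf _).1 hPl) (hA₁ ▸ h₁)
  have e₁₂ := solRatio_eq_neg_div f A₁ θ₁₂ φ₁₂ sQ L₁₂ ((hf _).1 hQl) (hA₂ ▸ h₂)
  have e₂₀ := solRatio_eq_neg_div f A₂ θ₂₀ φ₂₀ sR L₂₀ ((hf _).1 hRl) (hA₀ ▸ h₀)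
  rw [e₀₁, e₁₂, e₂₀, hA₁, hA₂, hA₀]
  field_simp

/-- **Menelaus' theorem for translation triangles in Sol.** -/
theorem sol_menelaus
    (A₀ A₁ A₂ : ℝ × ℝ × ℝ)
    (hind : AffineIndependent ℝ ![solProj A₀, solProj A₁, solProj A₂])
    (θ₀₁ φ₀₁ θ₁₂ φ₁₂ θ₂₀ φ₂₀ : ℝ)
    (hθ₀₁ : sin θ₀₁ ≠ 0) (hθ₁₂ : sin θ₁₂ ≠ 0) (hθ₂₀ : sin θ₂₀ ≠ 0)
    (L₀₁ L₁₂ L₂₀ : ℝ) (hL₀₁ : 0 < L₀₁) (hL₁₂ : 0 < L₁₂) (hL₂₀ : 0 < L₂₀)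
    (hA₁ : solCurve A₀ θ₀₁ φ₀₁ L₀₁ = A₁)
    (hA₂ : solCurve A₁ θ₁₂ φ₁₂ L₁₂ = A₂)
    (hA₀ : solCurve A₂ θ₂₀ φ₂₀ L₂₀ = A₀)
    (sP sQ sR : ℝ)
    (hsP0 : sP ≠ 0) (hsP1 : sP ≠ L₀₁) (hsQ0 : sQ ≠ 0) (hsQ1 : sQ ≠ L₁₂)
    (hsR0 : sR ≠ 0) (hsR1 : sR ≠ L₂₀)
    (P Q R : ℝ × ℝ × ℝ)
    (hP : P = solCurve A₀ θ₀₁ φ₀₁ sP)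
    (hQ : Q = solCurve A₁ θ₁₂ φ₁₂ sQ)
    (hR : R = solCurve A₂ θ₂₀ φ₂₀ sR)
    (a b : ℝ × ℝ) (hab : a ≠ b)
    (hPl : solProj P ∈ affineSpan ℝ {a, b})
    (hQl : solProj Q ∈ affineSpan ℝ {a, b})
    (hRl : solProj R ∈ affineSpan ℝ {a, b})
    (hA0l : solProj A₀ ∉ affineSpan ℝ {a, b})
    (hA1l : solProj A₁ ∉ affineSpan ℝ {a, b})
    (hA2l : solProj A₂ ∉ affineSpan ℝ {a, b}) :
    solRatio sP L₀₁ (sin θ₀₁) * solRatio sQ L₁₂ (sin θ₁₂) * solRatio sR L₂₀ (sin θ₂₀) = -1 :=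
  sol_menelaus_general A₀ A₁ A₂ θ₀₁ φ₀₁ θ₁₂ φ₁₂ θ₂₀ φ₂₀ L₀₁ L₁₂ L₂₀ hA₁ hA₂ hA₀ sP sQ sR P Q R hP hQ
    hR a b hab hPl hQl hRl hA0l hA1l hA2l
end

section
/- (Menelaus' theorem in the hyperbolic plane.) Let A, B, C be three points of the hyperbolic plane ℍ not lying on a common geodesic. Let P, Q, R ∈ ℍ be points, none equal to any of A, B, C, such that P is collinear with A and B, Q is collinear with B and C, R is collinear with C and A, and P, Q, R are collinear (lie on a common geodesic). Then s(A,P,B) · s(B,Q,C) · s(C,R,A) = −1, where s denotes the signed hyperbolic simple ratio. -/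
open Real Classical

/-- Three points of the hyperbolic plane lie on a common geodesic iff one of them
lies (metrically) between the other two. -/
def HypCollinear (X Y Z : UpperHalfPlane) : Prop :=
  dist X Y + dist Y Z = dist X Z ∨
  dist Y X + dist X Z = dist Y Z ∨
  dist X Z + dist Z Y = dist X Y

/-- `P` lies strictly between `X` and `Y` in the hyperbolic plane. -/
def HypBetween (X P Y : UpperHalfPlane) : Prop :=
  dist X P + dist P Y = dist X Y ∧ P ≠ X ∧ P ≠ Y

/-- The signed hyperbolic simple ratio of three points on a common geodesic. -/
noncomputable def hypRatio (X P Y : UpperHalfPlane) : ℝ :=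
  if HypBetween X P Y then Real.sinh (dist X P) / Real.sinh (dist P Y)
  else -Real.sinh (dist X P) / Real.sinh (dist P Y)

/-!
The map `φ = toHyperboloid` sends ℍ to the hyperboloid model in `ℝ³`, where the Lorentz form
`x₀y₀ - x₁y₁ - x₂y₂` of `φ z, φ w` is `cosh (dist z w)`. If `Y` lies on the geodesic segment `XZ`,
the addition formulas make `v = sinh(YZ) φX - sinh(XZ) φY + sinh(XY) φZ` Lorentz-orthogonal to
`φX, φY, φZ`, so `v` is null and orthogonal to the timelike `φY`, whence `v = 0`. Thus a point
`P ≠ A, B` of the line `AB` is, up to a nonzero scalar, `φA + s(A,P,B) φB`; collinear points have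
dependent images, while non-collinear ones have independent images, because their Gram determinant
`1 + 2abc - a² - b² - c²` in the `cosh`s of the sides vanishes only when one side is the sum or
difference of the other two. For independent `a, b, c`, the vectors `a + s b`, `b + t c`, `c + u a`
are dependent only if `s t u = -1`.
-/

noncomputable def lorentzForm : LinearMap.BilinForm ℝ (Fin 3 → ℝ) :=
  Matrix.toBilin' (Matrix.diagonal ![1, -1, -1])

lemma lorentzForm_apply (u v : Fin 3 → ℝ) :
    lorentzForm u v = u 0 * v 0 - u 1 * v 1 - u 2 * v 2 := by
  simp only [lorentzForm, Matrix.toBilin'_apply', Matrix.mulVec_diagonal, dotProduct,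
    Fin.sum_univ_three, Matrix.cons_val]
  ring

lemma eq_zero_of_lorentzForm_eq_zero {x v : Fin 3 → ℝ} (hx : 0 < lorentzForm x x)
    (hvx : lorentzForm v x = 0) (hvv : lorentzForm v v = 0) : v = 0 := by
  rw [lorentzForm_apply] at hx hvx hvv
  have hcs : v 0 ^ 2 * (x 0 * x 0 - x 1 * x 1 - x 2 * x 2) = -(v 1 * x 2 - v 2 * x 1) ^ 2 := by
    linear_combination (v 0 * x 0 + v 1 * x 1 + v 2 * x 2) * hvx - (x 1 ^ 2 + x 2 ^ 2) * hvv
  have h0 : v 0 = 0 := by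
    refine pow_eq_zero_iff two_ne_zero |>.mp <| le_antisymm ?_ (sq_nonneg _)
    exact nonpos_of_mul_nonpos_left (hcs ▸ neg_nonpos.2 (sq_nonneg _)) hx
  have h1 : v 1 = 0 := by nlinarith [sq_nonneg (v 1), sq_nonneg (v 2)]
  have h2 : v 2 = 0 := by nlinarith [sq_nonneg (v 1), sq_nonneg (v 2)]
  ext i
  fin_cases i
  exacts [h0, h1, h2]

theorem mul_mul_eq_neg_one_of_not_linearIndependent {K V : Type*} [Field K] [AddCommGroup V]
    [Module K V] {a b c p q r : V} {s t u α β γ : K} (habc : LinearIndependent K ![a, b, c])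
    (hα : α ≠ 0) (hβ : β ≠ 0) (hγ : γ ≠ 0)
    (hp : p = α • (a + s • b)) (hq : q = β • (b + t • c)) (hr : r = γ • (c + u • a))
    (hpqr : ¬ LinearIndependent K ![p, q, r]) : s * t * u = -1 := by
  obtain ⟨g, hg, i, hi⟩ := Fintype.not_linearIndependent_iff.1 hpqr
  set x := g 0 * α
  set y := g 1 * β
  set z := g 2 * γ
  have hcoef := Fintype.linearIndependent_iff.1 habc ![x + z * u, x * s + y, y * t + z] (by
    simp only [Fin.sum_univ_three, Matrix.cons_val] at hg ⊢
    rw [hp, hq, hr] at hg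
    linear_combination (norm := module) hg)
  have ha : x + z * u = 0 := hcoef 0
  have hb : x * s + y = 0 := hcoef 1
  have hc : y * t + z = 0 := hcoef 2
  have hx : x ≠ 0 := by
    intro hx
    have hy : y = 0 := by linear_combination hb - s * hx
    have hz : z = 0 := by linear_combination hc - t * hy
    fin_cases i
    exacts [hi ((mul_eq_zero.1 hx).resolve_right hα), hi ((mul_eq_zero.1 hy).resolve_right hβ),
      hi ((mul_eq_zero.1 hz).resolve_right hγ)]
  exact mul_left_cancel₀ hx (by linear_combination ha - u * hc + t * u * hb)

namespace UpperHalfPlane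

noncomputable def toHyperboloid (z : ℍ) : Fin 3 → ℝ :=
  ![(z.re ^ 2 + z.im ^ 2 + 1) / (2 * z.im), z.re / z.im, (z.re ^ 2 + z.im ^ 2 - 1) / (2 * z.im)]

@[simp]
lemma lorentzForm_toHyperboloid (z w : ℍ) :
    lorentzForm (toHyperboloid z) (toHyperboloid w) = cosh (dist z w) := by
  rw [lorentzForm_apply, cosh_dist']
  have := z.im_pos
  have := w.im_pos
  simp only [toHyperboloid, Matrix.cons_val]
  field_simp
  ring

lemma sinh_smul_sub_sinh_smul_add_sinh_smul_eq_zero {X Y Z : ℍ}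
    (h : dist X Y + dist Y Z = dist X Z) :
    sinh (dist Y Z) • toHyperboloid X - sinh (dist X Z) • toHyperboloid Y
      + sinh (dist X Y) • toHyperboloid Z = 0 := by
  set v := sinh (dist Y Z) • toHyperboloid X - sinh (dist X Z) • toHyperboloid Y
      + sinh (dist X Y) • toHyperboloid Z with hv_def
  have hv : ∀ W, lorentzForm v (toHyperboloid W) = sinh (dist Y Z) * cosh (dist X W)
      - sinh (dist X Z) * cosh (dist Y W) + sinh (dist X Y) * cosh (dist Z W) := by
    intro W; simp [v]
  have hX : lorentzForm v (toHyperboloid X) = 0 := by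
    rw [hv, ← h, dist_comm Y X, dist_comm Z X, ← h, dist_self, cosh_zero, sinh_add, cosh_add]
    linear_combination -sinh (dist Y Z) * cosh_sq_sub_sinh_sq (dist X Y)
  have hY : lorentzForm v (toHyperboloid Y) = 0 := by
    rw [hv, ← h, dist_comm Z Y, dist_self, cosh_zero, sinh_add]
    ring
  have hZ : lorentzForm v (toHyperboloid Z) = 0 := by
    rw [hv, ← h, dist_self, cosh_zero, sinh_add, cosh_add]
    linear_combination -(sinh (dist X Y) * cosh_sq_sub_sinh_sq (dist Y Z))
  have hvv : lorentzForm v v = 0 := by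
    nth_rw 2 [hv_def]
    simp only [map_add, map_sub, map_smul, hX, hY, hZ, smul_zero, sub_zero, add_zero]
  exact eq_zero_of_lorentzForm_eq_zero (by simp) hY hvv

lemma exists_toHyperboloid_eq_smul {A B P : ℍ} (hAB : A ≠ B) (hPA : P ≠ A) (hPB : P ≠ B)
    (h : HypCollinear A P B) : ∃ α : ℝ, α ≠ 0 ∧
      toHyperboloid P = α • (toHyperboloid A + hypRatio A P B • toHyperboloid B) := by
  have hc : 0 < sinh (dist A B) := sinh_pos_iff.2 (dist_pos.2 hAB)
  have hb : 0 < sinh (dist P B) := sinh_pos_iff.2 (dist_pos.2 hPB)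
  have hAP : dist A P ≠ 0 := dist_ne_zero.2 hPA.symm
  have hPB' : dist P B ≠ 0 := dist_ne_zero.2 hPB
  suffices ∃ ε : ℝ, ε ≠ 0 ∧ sinh (dist A B) • toHyperboloid P =
      ε • (toHyperboloid A + hypRatio A P B • toHyperboloid B) by
    obtain ⟨ε, hε, hP⟩ := this
    refine ⟨ε / sinh (dist A B), div_ne_zero hε hc.ne', ?_⟩
    rw [div_eq_inv_mul, mul_smul, ← hP, inv_smul_smul₀ hc.ne']
  rcases h with h | h | h
  · refine ⟨sinh (dist P B), hb.ne', ?_⟩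
    rw [hypRatio, if_pos ⟨h, hPA, hPB⟩, smul_add, smul_smul, mul_div_cancel₀ _ hb.ne']
    linear_combination (norm := module) -sinh_smul_sub_sinh_smul_add_sinh_smul_eq_zero h
  · have hnb : ¬ HypBetween A P B := fun hb => hAP (by rw [dist_comm P A] at h; linarith [hb.1])
    refine ⟨sinh (dist P B), hb.ne', ?_⟩
    rw [hypRatio, if_neg hnb, smul_add, smul_smul, mul_div_cancel₀ _ hb.ne']
    have hrel := sinh_smul_sub_sinh_smul_add_sinh_smul_eq_zero h
    rw [dist_comm P A] at hrel
    linear_combination (norm := module) hrel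
  · have hnb : ¬ HypBetween A P B := fun hb => hPB' (by rw [dist_comm B P] at h; linarith [hb.1])
    refine ⟨-sinh (dist P B), neg_ne_zero.2 hb.ne', ?_⟩
    rw [hypRatio, if_neg hnb, smul_add, smul_smul, neg_div, neg_mul_neg, mul_div_cancel₀ _ hb.ne']
    have hrel := sinh_smul_sub_sinh_smul_add_sinh_smul_eq_zero h
    rw [dist_comm B P] at hrel
    linear_combination (norm := module) hrel

lemma not_linearIndependent_toHyperboloid {P Q R : ℍ} (h : HypCollinear P Q R) :
    ¬ LinearIndependent ℝ ![toHyperboloid P, toHyperboloid Q, toHyperboloid R] := by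
  by_cases hPQ : P = Q
  · subst hPQ
    exact fun hli => zero_ne_one (hli.injective (a₁ := 0) (a₂ := 1) rfl)
  have hs : sinh (dist P Q) ≠ 0 := (sinh_pos_iff.2 (dist_pos.2 hPQ)).ne'
  rw [Fintype.not_linearIndependent_iff]
  rcases h with h | h | h
  · refine ⟨![sinh (dist Q R), -sinh (dist P R), sinh (dist P Q)], ?_, 2, hs⟩
    simp only [Fin.sum_univ_three, Matrix.cons_val]
    linear_combination (norm := module) sinh_smul_sub_sinh_smul_add_sinh_smul_eq_zero h
  · refine ⟨![-sinh (dist Q R), sinh (dist P R), sinh (dist Q P)], ?_, 2,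
      by simpa [dist_comm] using hs⟩
    simp only [Fin.sum_univ_three, Matrix.cons_val]
    linear_combination (norm := module) sinh_smul_sub_sinh_smul_add_sinh_smul_eq_zero h
  · refine ⟨![sinh (dist R Q), sinh (dist P R), -sinh (dist P Q)], ?_, 2, neg_ne_zero.2 hs⟩
    simp only [Fin.sum_univ_three, Matrix.cons_val]
    linear_combination (norm := module) sinh_smul_sub_sinh_smul_add_sinh_smul_eq_zero h

lemma gram_det_cosh_dist_ne_zero {A B C : ℍ} (h : ¬ HypCollinear A B C) :
    1 + 2 * cosh (dist A B) * cosh (dist A C) * cosh (dist B C) - cosh (dist A B) ^ 2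
      - cosh (dist A C) ^ 2 - cosh (dist B C) ^ 2 ≠ 0 := by
  intro hD
  have hfac : (cosh (dist B C) - cosh (dist A B + dist A C)) *
      (cosh (dist B C) - cosh (dist A B - dist A C)) = 0 := by
    rw [cosh_add, cosh_sub]
    linear_combination -hD - sinh (dist A C) ^ 2 * sinh_sq (dist A B)
      - (cosh (dist A B) ^ 2 - 1) * sinh_sq (dist A C)
  have eq_abs : ∀ x, cosh (dist B C) = cosh x → dist B C = |x| := fun x hx =>
    cosh_injOn dist_nonneg (abs_nonneg x) (by rw [cosh_abs]; exact hx)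
  rcases mul_eq_zero.1 hfac with hc | hc
  · have := eq_abs _ (sub_eq_zero.1 hc)
    rw [abs_of_nonneg (add_nonneg dist_nonneg dist_nonneg)] at this
    exact h (Or.inr (Or.inl (by rw [dist_comm B A]; linarith)))
  · have := eq_abs _ (sub_eq_zero.1 hc)
    rcases le_total (dist A C) (dist A B) with hle | hle
    · rw [abs_of_nonneg (sub_nonneg.2 hle)] at this
      exact h (Or.inr (Or.inr (by rw [dist_comm C B]; linarith)))
    · rw [abs_of_nonpos (sub_nonpos.2 hle)] at this
      exact h (Or.inl (by linarith))

lemma linearIndependent_toHyperboloid {A B C : ℍ} (h : ¬ HypCollinear A B C) :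
    LinearIndependent ℝ ![toHyperboloid A, toHyperboloid B, toHyperboloid C] := by
  rw [Fintype.linearIndependent_iff]
  intro g hg
  have hpair : ∀ W, g 0 * cosh (dist A W) + g 1 * cosh (dist B W) + g 2 * cosh (dist C W) = 0 := by
    intro W
    simpa [Fin.sum_univ_three] using congrArg (lorentzForm · (toHyperboloid W)) hg
  have hA := hpair A
  have hB := hpair B
  have hC := hpair C
  simp only [dist_self, cosh_zero, dist_comm B A, dist_comm C A, dist_comm C B] at hA hB hC
  have hD := gram_det_cosh_dist_ne_zero h
  set a := cosh (dist A B)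
  set b := cosh (dist A C)
  set c := cosh (dist B C)
  have h0 : g 0 = 0 := (mul_eq_zero.1 (by
    linear_combination (1 - c ^ 2) * hA + (b * c - a) * hB + (a * c - b) * hC)).resolve_left hD
  have h1 : g 1 = 0 := (mul_eq_zero.1 (by
    linear_combination (b * c - a) * hA + (1 - b ^ 2) * hB + (a * b - c) * hC)).resolve_left hD
  have h2 : g 2 = 0 := (mul_eq_zero.1 (by
    linear_combination (a * c - b) * hA + (a * b - c) * hB + (1 - a ^ 2) * hC)).resolve_left hD
  intro i
  fin_cases i
  exacts [h0, h1, h2]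

end UpperHalfPlane

lemma ne_of_not_hypCollinear {A B C : UpperHalfPlane} (h : ¬ HypCollinear A B C) :
    A ≠ B ∧ B ≠ C ∧ C ≠ A := by
  refine ⟨?_, ?_, ?_⟩ <;> rintro rfl <;> simp [HypCollinear] at h

theorem hyperbolic_menelaus_general
    (A B C : UpperHalfPlane) (hABC : ¬ HypCollinear A B C)
    (P Q R : UpperHalfPlane)
    (hPA : P ≠ A) (hPB : P ≠ B)
    (hQB : Q ≠ B) (hQC : Q ≠ C)
    (hRA : R ≠ A) (hRC : R ≠ C)
    (hP : HypCollinear A P B) (hQ : HypCollinear B Q C) (hR : HypCollinear C R A)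
    (hPQR : HypCollinear P Q R) :
    hypRatio A P B * hypRatio B Q C * hypRatio C R A = -1 := by
  obtain ⟨hAB, hBC, hCA⟩ := ne_of_not_hypCollinear hABC
  obtain ⟨α, hα, hP'⟩ := UpperHalfPlane.exists_toHyperboloid_eq_smul hAB hPA hPB hP
  obtain ⟨β, hβ, hQ'⟩ := UpperHalfPlane.exists_toHyperboloid_eq_smul hBC hQB hQC hQ
  obtain ⟨γ, hγ, hR'⟩ := UpperHalfPlane.exists_toHyperboloid_eq_smul hCA hRC hRA hR
  exact mul_mul_eq_neg_one_of_not_linearIndependent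
    (UpperHalfPlane.linearIndependent_toHyperboloid hABC) hα hβ hγ hP' hQ' hR'
    (UpperHalfPlane.not_linearIndependent_toHyperboloid hPQR)

/-- **Menelaus' theorem in the hyperbolic plane.** -/
theorem hyperbolic_menelaus
    (A B C : UpperHalfPlane) (hABC : ¬ HypCollinear A B C)
    (P Q R : UpperHalfPlane)
    (hPA : P ≠ A) (hPB : P ≠ B) (hPC : P ≠ C)
    (hQA : Q ≠ A) (hQB : Q ≠ B) (hQC : Q ≠ C)
    (hRA : R ≠ A) (hRB : R ≠ B) (hRC : R ≠ C)
    (hP : HypCollinear A P B) (hQ : HypCollinear B Q C) (hR : HypCollinear C R A)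
    (hPQR : HypCollinear P Q R) :
    hypRatio A P B * hypRatio B Q C * hypRatio C R A = -1 :=
  hyperbolic_menelaus_general A B C hABC P Q R hPA hPB hQB hQC hRA hRC hP hQ hR hPQR
end

section
/- (Ceva's theorem in the hyperbolic plane.) Let A, B, C be three points of the hyperbolic plane ℍ not lying on a common geodesic, and let T ∈ ℍ be a point not collinear with any two of A, B, C. Let P, Q, R ∈ ℍ, none equal to any of A, B, C, be such that Q is collinear with A and T and also collinear with B and C; R is collinear with B and T and also collinear with C and A; and P is collinear with C and T and also collinear with A and B. Then s(A,P,B) · s(B,Q,C) · s(C,R,A) = 1, where s denotes the signed hyperbolic simple ratio. -/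
open Real Classical

/-!
The map `v = toHyperboloid` sends `ℍ` isometrically onto the hyperboloid `minkowski x x = 1`:
`minkowski (v z) (v w) = cosh (dist z w)`. The square of `det (v X, v Y, v Z)` is the Gram
determinant, which factors as `(cosh (a + b) - cosh c) * (cosh c - cosh (a - b))` in the three
distances; hence three points are collinear iff their images are linearly dependent. If `P` lies
on the geodesic `XY`, then `sinh (dist X Y) • v P = ± sinh (dist P Y) • v X ± sinh (dist X P) • v Y`
with the signs of the simple ratio, and the theorem becomes the projective Ceva identity for the
planes through `v T`.
-/

open Matrix
open scoped UpperHalfPlane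

def minkowski (u v : Fin 3 → ℝ) : ℝ := u 0 * v 0 - u 1 * v 1 - u 2 * v 2

theorem eq_zero_of_minkowski_eq_zero {u d : Fin 3 → ℝ} (hu : 0 < minkowski u u)
    (hdu : minkowski d u = 0) (hdd : minkowski d d = 0) : d = 0 := by
  simp only [minkowski] at hu hdu hdd
  have key : d 0 ^ 2 * (u 0 ^ 2 - u 1 ^ 2 - u 2 ^ 2) + (d 1 * u 2 - d 2 * u 1) ^ 2 = 0 := by
    linear_combination (d 0 * u 0 + d 1 * u 1 + d 2 * u 2) * hdu - (u 1 ^ 2 + u 2 ^ 2) * hdd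
  have h0 : d 0 = 0 := by
    by_contra hne
    have : 0 < d 0 ^ 2 := by positivity
    nlinarith [mul_pos this hu, sq_nonneg (d 1 * u 2 - d 2 * u 1)]
  have h1 : d 1 = 0 := by nlinarith [sq_nonneg (d 1), sq_nonneg (d 2)]
  have h2 : d 2 = 0 := by nlinarith [sq_nonneg (d 1), sq_nonneg (d 2)]
  ext i
  fin_cases i <;> assumption

theorem det_sq_eq_gram (u v w : Fin 3 → ℝ) :
    det (of ![u, v, w]) ^ 2 =
      minkowski u u * minkowski v v * minkowski w w
        + 2 * minkowski u v * minkowski v w * minkowski u w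
        - minkowski u u * minkowski v w ^ 2 - minkowski v v * minkowski u w ^ 2
        - minkowski w w * minkowski u v ^ 2 := by
  simp only [det_fin_three, minkowski, of_apply, cons_val_zero, cons_val_one, cons_val_two,
    head_cons, tail_cons]
  ring

noncomputable def toHyperboloid (z : ℍ) : Fin 3 → ℝ :=
  ![(z.re ^ 2 + z.im ^ 2 + 1) / (2 * z.im), z.re / z.im, (z.re ^ 2 + z.im ^ 2 - 1) / (2 * z.im)]

theorem minkowski_toHyperboloid (z w : ℍ) :
    minkowski (toHyperboloid z) (toHyperboloid w) = cosh (dist z w) := by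
  rw [UpperHalfPlane.cosh_dist']
  have := z.im_ne_zero
  have := w.im_ne_zero
  simp only [minkowski, toHyperboloid, cons_val_zero, cons_val_one, cons_val_two, head_cons,
    tail_cons]
  field_simp
  ring

theorem minkowski_toHyperboloid_self (z : ℍ) :
    minkowski (toHyperboloid z) (toHyperboloid z) = 1 := by
  rw [minkowski_toHyperboloid, dist_self, cosh_zero]

theorem toHyperboloid_ne_zero (z : ℍ) : toHyperboloid z ≠ 0 := by
  intro h
  simpa [h, minkowski] using minkowski_toHyperboloid_self z

theorem sinh_smul_toHyperboloid_of_dist_add_dist {X Y Z : ℍ}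
    (h : dist X Y + dist Y Z = dist X Z) :
    sinh (dist X Z) • toHyperboloid Y =
      sinh (dist Y Z) • toHyperboloid X + sinh (dist X Y) • toHyperboloid Z := by
  have eXY := minkowski_toHyperboloid X Y
  have eYZ := minkowski_toHyperboloid Y Z
  have eXZ := minkowski_toHyperboloid X Z
  have eX := minkowski_toHyperboloid_self X
  have eY := minkowski_toHyperboloid_self Y
  have eZ := minkowski_toHyperboloid_self Z
  rw [← h, cosh_add] at eXZ
  rw [← h, sinh_add, ← sub_eq_zero]
  set a := dist X Y
  set b := dist Y Z
  apply eq_zero_of_minkowski_eq_zero (u := toHyperboloid Y) (by rw [eY]; exact one_pos)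
  all_goals
    simp only [minkowski, Pi.sub_apply, Pi.add_apply, Pi.smul_apply, smul_eq_mul] at *
  · linear_combination (sinh a * cosh b + cosh a * sinh b) * eY - sinh b * eXY - sinh a * eYZ
  · linear_combination (sinh a * cosh b + cosh a * sinh b) ^ 2 * eY + sinh b ^ 2 * eX
      + sinh a ^ 2 * eZ - 2 * (sinh a * cosh b + cosh a * sinh b) * sinh b * eXY
      - 2 * (sinh a * cosh b + cosh a * sinh b) * sinh a * eYZ + 2 * sinh a * sinh b * eXZ
      - sinh b ^ 2 * cosh_sq a - sinh a ^ 2 * cosh_sq b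

theorem det_toHyperboloid_sq (X Y Z : ℍ) :
    det (of ![toHyperboloid X, toHyperboloid Y, toHyperboloid Z]) ^ 2 =
      (cosh (dist X Z + dist Z Y) - cosh (dist X Y)) *
        (cosh (dist X Y) - cosh (dist X Z - dist Z Y)) := by
  rw [det_sq_eq_gram]
  simp only [minkowski_toHyperboloid, dist_self, cosh_zero, cosh_add, cosh_sub, dist_comm Z Y]
  linear_combination sinh (dist X Z) ^ 2 * cosh_sq (dist Y Z)
    + (cosh (dist Y Z) ^ 2 - 1) * cosh_sq (dist X Z)

theorem hypCollinear_iff_det_eq_zero {X Y Z : ℍ} :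
    HypCollinear X Y Z ↔ det (of ![toHyperboloid X, toHyperboloid Y, toHyperboloid Z]) = 0 := by
  have cosh_eq_cosh {x y : ℝ} : cosh x = cosh y ↔ |x| = |y| := by
    simp only [le_antisymm_iff, cosh_le_cosh]
  rw [← sq_eq_zero_iff, det_toHyperboloid_sq, mul_eq_zero, sub_eq_zero, sub_eq_zero,
    cosh_eq_cosh, cosh_eq_cosh, abs_eq_abs, abs_eq_abs]
  unfold HypCollinear
  have := dist_nonneg (x := X) (y := Y)
  have := dist_nonneg (x := Y) (y := Z)
  have := dist_nonneg (x := X) (y := Z)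
  rw [dist_comm Y X, dist_comm Z Y]
  grind

theorem exists_toHyperboloid_eq_smul_add_smul {X P Y : ℍ} (hXY : X ≠ Y) (hPX : P ≠ X)
    (hPY : P ≠ Y) (h : HypCollinear X P Y) :
    ∃ α β : ℝ, α ≠ 0 ∧ toHyperboloid P = α • toHyperboloid X + β • toHyperboloid Y ∧
      hypRatio X P Y = β / α := by
  have hsinh_ne_zero {Z W : ℍ} (h : Z ≠ W) : sinh (dist Z W) ≠ 0 :=
    (sinh_pos_iff.2 (dist_pos.2 h)).ne'
  suffices ∃ a b : ℝ, a ≠ 0 ∧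
      sinh (dist X Y) • toHyperboloid P = a • toHyperboloid X + b • toHyperboloid Y ∧
      hypRatio X P Y = b / a by
    obtain ⟨a, b, ha, hrel, hratio⟩ := this
    set s := sinh (dist X Y)
    refine ⟨s⁻¹ * a, s⁻¹ * b, mul_ne_zero (inv_ne_zero (hsinh_ne_zero hXY)) ha, ?_, ?_⟩
    · rw [mul_smul, mul_smul, ← smul_add, ← hrel, inv_smul_smul₀ (hsinh_ne_zero hXY)]
    · rw [hratio, mul_div_mul_left _ _ (inv_ne_zero (hsinh_ne_zero hXY))]
  rcases h with h | h | h
  · have hrel := sinh_smul_toHyperboloid_of_dist_add_dist h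
    refine ⟨_, _, hsinh_ne_zero hPY, hrel, ?_⟩
    rw [hypRatio, if_pos ⟨h, hPX, hPY⟩]
  · have hrel := sinh_smul_toHyperboloid_of_dist_add_dist h
    refine ⟨sinh (dist P Y), -sinh (dist X P), hsinh_ne_zero hPY, ?_, ?_⟩
    · rw [hrel, neg_smul, dist_comm P X]
      abel
    · have hnot : ¬ HypBetween X P Y := fun hb => hPX (dist_eq_zero.1 (by
        linarith [hb.1, dist_comm X P]))
      rw [hypRatio, if_neg hnot, neg_div]
  · have hrel := sinh_smul_toHyperboloid_of_dist_add_dist h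
    refine ⟨-sinh (dist P Y), sinh (dist X P), neg_ne_zero.2 (hsinh_ne_zero hPY), ?_, ?_⟩
    · rw [hrel, neg_smul, dist_comm P Y]
      abel
    · have hnot : ¬ HypBetween X P Y := fun hb => hPY (dist_eq_zero.1 (by
        linarith [hb.1, dist_comm Y P]))
      rw [hypRatio, if_neg hnot, div_neg, neg_div]

theorem det_smul_add_det_smul_add_det_smul {K : Type*} [CommRing K] (a b c t : Fin 3 → K) :
    det (of ![t, b, c]) • a + det (of ![a, t, c]) • b + det (of ![a, b, t]) • c =
      det (of ![a, b, c]) • t := by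
  ext i
  fin_cases i <;>
  · simp only [det_fin_three, of_apply, cons_val_zero, cons_val_one, cons_val_two,
      head_cons, tail_cons, Pi.add_apply, Pi.smul_apply, smul_eq_mul, Fin.zero_eta, Fin.mk_one,
      Fin.reduceFinMk]
    ring

theorem ceva_of_det_eq_zero {K : Type*} [Field K] {a b c t : Fin 3 → K}
    (habc : det (of ![a, b, c]) ≠ 0) (ht : t ≠ 0) {α β γ δ ε ζ : K}
    (hα : α ≠ 0) (hγ : γ ≠ 0) (hε : ε ≠ 0)
    (hP : det (of ![c, t, α • a + β • b]) = 0) (hQ : det (of ![a, t, γ • b + δ • c]) = 0)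
    (hR : det (of ![b, t, ε • c + ζ • a]) = 0) :
    β * δ * ζ = α * γ * ε := by
  have cramer := det_smul_add_det_smul_add_det_smul a b c t
  set x := det (of ![t, b, c])
  set y := det (of ![a, t, c])
  set z := det (of ![a, b, t])
  obtain ⟨hxy, hyz, hzx⟩ : β * x = α * y ∧ δ * y = γ * z ∧ ζ * z = ε * x := by
    simp only [x, y, z, det_fin_three, of_apply, cons_val_zero, cons_val_one, cons_val_two,
      head_cons, tail_cons, Pi.add_apply, Pi.smul_apply, smul_eq_mul] at hP hQ hR ⊢
    exact ⟨by linear_combination hP, by linear_combination hQ, by linear_combination hR⟩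
  have hxyz : ¬ (x = 0 ∧ y = 0 ∧ z = 0) := by
    rintro ⟨hx, hy, hz⟩
    simp only [hx, hy, hz, zero_smul, add_zero] at cramer
    exact ht ((smul_eq_zero.1 cramer.symm).resolve_left habc)
  have hy_of_hx : x = 0 → y = 0 := fun h => by simpa [h, hα] using hxy
  have hz_of_hy : y = 0 → z = 0 := fun h => by simpa [h, hγ] using hyz
  have hx_of_hz : z = 0 → x = 0 := fun h => by simpa [h, hε] using hzx
  have hx : x ≠ 0 := fun h => hxyz ⟨h, hy_of_hx h, hz_of_hy (hy_of_hx h)⟩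
  have hy : y ≠ 0 := fun h => hxyz ⟨hx_of_hz (hz_of_hy h), h, hz_of_hy h⟩
  have hz : z ≠ 0 := fun h => hxyz ⟨hx_of_hz h, hy_of_hx (hx_of_hz h), h⟩
  apply mul_right_cancel₀ (mul_ne_zero (mul_ne_zero hx hy) hz)
  linear_combination (δ * y * ζ * z) * hxy + (α * y * ζ * z) * hyz + (α * y * γ * z) * hzx

theorem hyperbolic_ceva_general
    (A B C : UpperHalfPlane) (hABC : ¬ HypCollinear A B C)
    (T : UpperHalfPlane)
    (P Q R : UpperHalfPlane)
    (hPA : P ≠ A) (hPB : P ≠ B)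
    (hQB : Q ≠ B) (hQC : Q ≠ C)
    (hRA : R ≠ A) (hRC : R ≠ C)
    (hQ₁ : HypCollinear A T Q) (hQ₂ : HypCollinear B Q C)
    (hR₁ : HypCollinear B T R) (hR₂ : HypCollinear C R A)
    (hP₁ : HypCollinear C T P) (hP₂ : HypCollinear A P B) :
    hypRatio A P B * hypRatio B Q C * hypRatio C R A = 1 := by
  have hAB : A ≠ B := by rintro rfl; exact hABC (Or.inl (by simp))
  have hBC : B ≠ C := by rintro rfl; exact hABC (Or.inl (by simp))
  have hCA : C ≠ A := by rintro rfl; exact hABC (Or.inr (Or.inr (by simp)))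
  obtain ⟨α, β, hα, hP, hAPB⟩ := exists_toHyperboloid_eq_smul_add_smul hAB hPA hPB hP₂
  obtain ⟨γ, δ, hγ, hQ, hBQC⟩ := exists_toHyperboloid_eq_smul_add_smul hBC hQB hQC hQ₂
  obtain ⟨ε, ζ, hε, hR, hCRA⟩ := exists_toHyperboloid_eq_smul_add_smul hCA hRC hRA hR₂
  rw [hAPB, hBQC, hCRA, div_mul_div_comm, div_mul_div_comm,
    div_eq_one_iff_eq (mul_ne_zero (mul_ne_zero hα hγ) hε)]
  rw [hypCollinear_iff_det_eq_zero] at hABC hP₁ hQ₁ hR₁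
  exact ceva_of_det_eq_zero hABC (toHyperboloid_ne_zero T) hα hγ hε (hP ▸ hP₁) (hQ ▸ hQ₁)
    (hR ▸ hR₁)

/-- **Ceva's theorem in the hyperbolic plane.** -/
theorem hyperbolic_ceva
    (A B C : UpperHalfPlane) (hABC : ¬ HypCollinear A B C)
    (T : UpperHalfPlane)
    (hTAB : ¬ HypCollinear A B T) (hTBC : ¬ HypCollinear B C T)
    (hTCA : ¬ HypCollinear C A T)
    (P Q R : UpperHalfPlane)
    (hPA : P ≠ A) (hPB : P ≠ B) (hPC : P ≠ C)
    (hQA : Q ≠ A) (hQB : Q ≠ B) (hQC : Q ≠ C)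
    (hRA : R ≠ A) (hRB : R ≠ B) (hRC : R ≠ C)
    (hQ₁ : HypCollinear A T Q) (hQ₂ : HypCollinear B Q C)
    (hR₁ : HypCollinear B T R) (hR₂ : HypCollinear C R A)
    (hP₁ : HypCollinear C T P) (hP₂ : HypCollinear A P B) :
    hypRatio A P B * hypRatio B Q C * hypRatio C R A = 1 :=
  hyperbolic_ceva_general A B C hABC T P Q R hPA hPB hQB hQC hRA hRC hQ₁ hQ₂ hR₁ hR₂ hP₁ hP₂
end

section
/- (Spherical Menelaus' theorem, unsigned form.) Let A, B, C be linearly independent unit vectors in EuclideanSpace ℝ (Fin 3). Let P, Q, R be unit vectors with P ∈ span ℝ {A, B}, Q ∈ span ℝ {B, C}, R ∈ span ℝ {C, A}, such that P ∉ {A, −A, B, −B}, Q ∉ {B, −B, C, −C}, R ∉ {C, −C, A, −A}. If P, Q, R are linearly dependent (i.e., lie on a common great circle), then sin ∠(A,P) · sin ∠(B,Q) · sin ∠(C,R) = sin ∠(P,B) · sin ∠(Q,C) · sin ∠(R,A), where ∠(X,Y) denotes the angle between the vectors X and Y (the spherical distance between the corresponding points of the unit sphere). -/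
/-!
Write `P = a₁ A + b₁ B`, `Q = a₂ B + b₂ C`, `R = a₃ C + b₃ A`. The Gram determinant of `A, P` is
`b₁²` times that of `A, B`, so for unit vectors `sin ∠(A,P) = |b₁| sin ∠(A,B)` and likewise
`sin ∠(P,B) = |a₁| sin ∠(A,B)`; the two sides of the identity are therefore `|b₁ b₂ b₃|` and
`|a₁ a₂ a₃|` times the same factor. The coordinate matrix of `P, Q, R` in the basis `A, B, C` has
determinant `a₁ a₂ a₃ + b₁ b₂ b₃`, which vanishes because `P, Q, R` are dependent.
-/

open InnerProductGeometry

section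
variable {V : Type*} [NormedAddCommGroup V] [InnerProductSpace ℝ V]

theorem sin_angle_mul_norm_mul_norm_smul_add_smul (x y : V) (a b : ℝ) :
    Real.sin (angle x (a • x + b • y)) * (‖x‖ * ‖a • x + b • y‖) =
      |b| * (Real.sin (angle x y) * (‖x‖ * ‖y‖)) := by
  rw [sin_angle_mul_norm_mul_norm, sin_angle_mul_norm_mul_norm, ← Real.sqrt_sq_eq_abs,
    ← Real.sqrt_mul (sq_nonneg b)]
  congr 1
  simp only [inner_add_left, inner_add_right, real_inner_smul_left, real_inner_smul_right,
    real_inner_comm x y]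
  ring

theorem sin_angle_smul_add_smul_of_norm_eq_one {x y : V} (hx : ‖x‖ = 1) (hy : ‖y‖ = 1)
    {a b : ℝ} (h : ‖a • x + b • y‖ = 1) :
    Real.sin (angle x (a • x + b • y)) = |b| * Real.sin (angle x y) := by
  simpa [hx, hy, h] using sin_angle_mul_norm_mul_norm_smul_add_smul x y a b

theorem sin_angle_smul_add_smul_left_of_norm_eq_one {x y : V} (hx : ‖x‖ = 1) (hy : ‖y‖ = 1)
    {a b : ℝ} (h : ‖a • x + b • y‖ = 1) :
    Real.sin (angle (a • x + b • y) y) = |a| * Real.sin (angle x y) := by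
  rw [add_comm] at h ⊢
  rw [angle_comm, sin_angle_smul_add_smul_of_norm_eq_one hy hx h, angle_comm]

end

section
variable {K V ι : Type*} [CommRing K] [IsDomain K] [AddCommGroup V] [Module K V]
  [Fintype ι] [DecidableEq ι]

theorem Matrix.det_eq_zero_of_not_linearIndependent_sum_smul {v : ι → V}
    (hv : LinearIndependent K v) (M : Matrix ι ι K)
    (hM : ¬ LinearIndependent K fun i ↦ ∑ j, M i j • v j) : M.det = 0 := by
  obtain ⟨g, hg, i, hgi⟩ := Fintype.not_linearIndependent_iff.mp hM
  refine M.exists_vecMul_eq_zero_iff.mp ⟨g, fun h ↦ hgi (by simp [h]), ?_⟩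
  refine funext (Fintype.linearIndependent_iff.mp hv _ ?_)
  simp only [Matrix.vecMul, dotProduct, Finset.sum_smul, mul_smul]
  rw [Finset.sum_comm]
  simpa only [Finset.smul_sum] using hg

theorem mul_mul_add_mul_mul_eq_zero_of_not_linearIndependent {A B C P Q R : V}
    (hABC : LinearIndependent K ![A, B, C])
    {a₁ b₁ a₂ b₂ a₃ b₃ : K} (hP : a₁ • A + b₁ • B = P) (hQ : a₂ • B + b₂ • C = Q)
    (hR : a₃ • C + b₃ • A = R) (hPQR : ¬ LinearIndependent K ![P, Q, R]) :
    a₁ * a₂ * a₃ + b₁ * b₂ * b₃ = 0 := by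
  have h := Matrix.det_eq_zero_of_not_linearIndependent_sum_smul hABC
    !![a₁, b₁, 0; 0, a₂, b₂; b₃, 0, a₃] ?_
  · rw [Matrix.det_fin_three] at h
    simp only [Matrix.of_apply, Matrix.cons_val', Matrix.cons_val_zero, Matrix.cons_val_fin_one,
      Matrix.cons_val_one, Matrix.cons_val, mul_zero, sub_zero, zero_mul, add_zero] at h
    linear_combination h
  · convert hPQR using 2
    ext i
    fin_cases i <;> simp [Fin.sum_univ_three, ← hP, ← hQ, ← hR, add_comm]

end

theorem spherical_menelaus_general
    (A B C P Q R : EuclideanSpace ℝ (Fin 3))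
    (hA : ‖A‖ = 1) (hB : ‖B‖ = 1) (hC : ‖C‖ = 1)
    (hP : ‖P‖ = 1) (hQ : ‖Q‖ = 1) (hR : ‖R‖ = 1)
    (hABC : LinearIndependent ℝ ![A, B, C])
    (hPmem : P ∈ Submodule.span ℝ {A, B})
    (hQmem : Q ∈ Submodule.span ℝ {B, C})
    (hRmem : R ∈ Submodule.span ℝ {C, A})
    (hdep : ¬ LinearIndependent ℝ ![P, Q, R]) :
    Real.sin (angle A P) * Real.sin (angle B Q) * Real.sin (angle C R) =
      Real.sin (angle P B) * Real.sin (angle Q C) * Real.sin (angle R A) := by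
  obtain ⟨a₁, b₁, rfl⟩ := Submodule.mem_span_pair.mp hPmem
  obtain ⟨a₂, b₂, rfl⟩ := Submodule.mem_span_pair.mp hQmem
  obtain ⟨a₃, b₃, rfl⟩ := Submodule.mem_span_pair.mp hRmem
  have hprod : a₁ * a₂ * a₃ = -(b₁ * b₂ * b₃) := eq_neg_of_add_eq_zero_left
    (mul_mul_add_mul_mul_eq_zero_of_not_linearIndependent hABC rfl rfl rfl hdep)
  have hcoeff : |a₁| * |a₂| * |a₃| = |b₁| * |b₂| * |b₃| := by
    rw [← abs_mul, ← abs_mul, hprod, abs_neg, abs_mul, abs_mul]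
  rw [sin_angle_smul_add_smul_of_norm_eq_one hA hB hP,
    sin_angle_smul_add_smul_of_norm_eq_one hB hC hQ,
    sin_angle_smul_add_smul_of_norm_eq_one hC hA hR,
    sin_angle_smul_add_smul_left_of_norm_eq_one hA hB hP,
    sin_angle_smul_add_smul_left_of_norm_eq_one hB hC hQ,
    sin_angle_smul_add_smul_left_of_norm_eq_one hC hA hR]
  linear_combination
    (Real.sin (angle A B) * Real.sin (angle B C) * Real.sin (angle C A)) * hcoeff.symm

/-- **Spherical Menelaus' theorem (unsigned form).**
If unit vectors `P`, `Q`, `R` on the sides (great circles) of a spherical triangle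
`A B C` lie on a common great circle, then the product of the sines of the spherical
distances `∠(A,P)`, `∠(B,Q)`, `∠(C,R)` equals the product of the sines of
`∠(P,B)`, `∠(Q,C)`, `∠(R,A)`. -/
theorem spherical_menelaus
    (A B C P Q R : EuclideanSpace ℝ (Fin 3))
    (hA : ‖A‖ = 1) (hB : ‖B‖ = 1) (hC : ‖C‖ = 1)
    (hP : ‖P‖ = 1) (hQ : ‖Q‖ = 1) (hR : ‖R‖ = 1)
    (hABC : LinearIndependent ℝ ![A, B, C])
    (hPmem : P ∈ Submodule.span ℝ {A, B})
    (hQmem : Q ∈ Submodule.span ℝ {B, C})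
    (hRmem : R ∈ Submodule.span ℝ {C, A})
    (hP1 : P ≠ A) (hP2 : P ≠ -A) (hP3 : P ≠ B) (hP4 : P ≠ -B)
    (hQ1 : Q ≠ B) (hQ2 : Q ≠ -B) (hQ3 : Q ≠ C) (hQ4 : Q ≠ -C)
    (hR1 : R ≠ C) (hR2 : R ≠ -C) (hR3 : R ≠ A) (hR4 : R ≠ -A)
    (hdep : ¬ LinearIndependent ℝ ![P, Q, R]) :
    Real.sin (angle A P) * Real.sin (angle B Q) * Real.sin (angle C R) =
      Real.sin (angle P B) * Real.sin (angle Q C) * Real.sin (angle R A) :=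
  spherical_menelaus_general A B C P Q R hA hB hC hP hQ hR hABC hPmem hQmem hRmem hdep
end

section
/- (Spherical Ceva's theorem, unsigned form.) Let A, B, C be linearly independent unit vectors in EuclideanSpace ℝ (Fin 3), and let T be a unit vector with T ∉ span ℝ {A, B} ∪ span ℝ {B, C} ∪ span ℝ {C, A}. Let P, Q, R be unit vectors with Q ∈ span ℝ {B, C} ∩ span ℝ {A, T}, R ∈ span ℝ {C, A} ∩ span ℝ {B, T}, P ∈ span ℝ {A, B} ∩ span ℝ {C, T}, such that P ∉ {A, −A, B, −B}, Q ∉ {B, −B, C, −C}, R ∉ {C, −C, A, −A}. Then sin ∠(A,P) · sin ∠(B,Q) · sin ∠(C,R) = sin ∠(P,B) · sin ∠(Q,C) · sin ∠(R,A), where ∠(X,Y) denotes the angle between the vectors X and Y (the spherical distance between the corresponding points of the unit sphere). -/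
/-!
Write `T = α A + β B + γ C`. A point `Q = b B + c C` of the side `BC` lies on the great circle
through `A` and `T` exactly when `(b, c) = t (β, γ)` for some `t`, and for unit vectors in the
plane of `B` and `C` the sines `sin ∠(B, Q)` and `sin ∠(Q, C)` are `|c|` and `|b|` times
`sin ∠(B, C)`. So each side of the identity is `|α β γ|` times the product of the three
proportionality factors and the sines of the three sides.
-/

open InnerProductGeometry
open RealInnerProductSpace

section
variable {R M : Type*} [CommRing R] [AddCommGroup M] [Module R M]

lemma LinearIndependent.rotate_fin_three {A B C : M} (h : LinearIndependent R ![A, B, C]) :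
    LinearIndependent R ![B, C, A] := by
  convert (linearIndependent_equiv (finRotate 3)).mpr h using 1
  ext i; fin_cases i <;> rfl

lemma LinearIndependent.coeffs_eq_of_smul_add_smul_eq {A B C T : M}
    (h : LinearIndependent R ![A, B, C]) {α β γ : R} (hT : α • A + β • B + γ • C = T)
    {b c s t : R} (hx : b • B + c • C = s • A + t • T) : b = t * β ∧ c = t * γ := by
  subst hT
  have hzero := Fintype.linearIndependent_iff.mp h ![s + t * α, t * β - b, t * γ - c] (by
    simp only [Fin.sum_univ_three, Matrix.cons_val_zero, Matrix.cons_val_one, Matrix.cons_val_two,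
      Matrix.head_cons, Matrix.tail_cons]
    linear_combination (norm := module) -hx)
  exact ⟨(sub_eq_zero.mp (hzero 1)).symm, (sub_eq_zero.mp (hzero 2)).symm⟩

end

lemma LinearIndependent.exists_smul_add_smul_add_smul_eq {K V : Type*} [Field K] [AddCommGroup V]
    [Module K V] [FiniteDimensional K V] {A B C : V} (h : LinearIndependent K ![A, B, C])
    (hV : Module.finrank K V = 3) (T : V) :
    ∃ α β γ : K, α • A + β • B + γ • C = T := by
  have hspan : Submodule.span K (Set.range ![A, B, C]) = ⊤ :=
    h.span_eq_top_of_card_eq_finrank (by rw [hV, Fintype.card_fin])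
  obtain ⟨f, hf⟩ :=
    (Submodule.mem_span_range_iff_exists_fun K).mp (hspan ▸ Submodule.mem_top (x := T))
  exact ⟨f 0, f 1, f 2, by simpa [Fin.sum_univ_three] using hf⟩

section
variable {E : Type*} [NormedAddCommGroup E] [InnerProductSpace ℝ E]

lemma sin_angle_self_smul_add_smul {X Y : E} (hX : ‖X‖ = 1) (hY : ‖Y‖ = 1) {a b : ℝ}
    (h : ‖a • X + b • Y‖ = 1) :
    Real.sin (angle X (a • X + b • Y)) = |b| * √(1 - ⟪X, Y⟫ ^ 2) := by
  have hinner : ⟪X, a • X + b • Y⟫ = a + b * ⟪X, Y⟫ := by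
    rw [inner_add_right, real_inner_smul_right, real_inner_smul_right,
      real_inner_self_eq_norm_sq, hX]
    ring
  have hnorm : a ^ 2 + 2 * a * b * ⟪X, Y⟫ + b ^ 2 = 1 := by
    have h2 := congrArg (· ^ 2) h
    simp only [← real_inner_self_eq_norm_sq, inner_add_left, inner_add_right,
      real_inner_smul_left, real_inner_smul_right, real_inner_comm X Y] at h2
    rw [real_inner_self_eq_norm_sq, real_inner_self_eq_norm_sq, hX, hY] at h2
    linear_combination h2
  have hsq : 1 - (a + b * ⟪X, Y⟫) ^ 2 = b ^ 2 * (1 - ⟪X, Y⟫ ^ 2) := by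
    linear_combination -hnorm
  rw [angle, hX, h, one_mul, div_one, hinner, Real.sin_arccos, hsq,
    Real.sqrt_mul (sq_nonneg b), Real.sqrt_sq_eq_abs]

lemma sin_angle_smul_add_smul_self {X Y : E} (hX : ‖X‖ = 1) (hY : ‖Y‖ = 1) {a b : ℝ}
    (h : ‖a • X + b • Y‖ = 1) :
    Real.sin (angle (a • X + b • Y) Y) = |a| * √(1 - ⟪X, Y⟫ ^ 2) := by
  rw [add_comm] at h ⊢
  rw [angle_comm, sin_angle_self_smul_add_smul hY hX h, real_inner_comm]

lemma exists_sin_angle_eq_of_mem_cevian {A B C T Q : E} (hABC : LinearIndependent ℝ ![A, B, C])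
    {α β γ : ℝ} (hT : α • A + β • B + γ • C = T) (hB : ‖B‖ = 1) (hC : ‖C‖ = 1) (hQ : ‖Q‖ = 1)
    (hQmem : Q ∈ Submodule.span ℝ {B, C} ⊓ Submodule.span ℝ {A, T}) :
    ∃ t : ℝ, Real.sin (angle B Q) = |t * γ| * √(1 - ⟪B, C⟫ ^ 2) ∧
      Real.sin (angle Q C) = |t * β| * √(1 - ⟪B, C⟫ ^ 2) := by
  obtain ⟨b, c, rfl⟩ := Submodule.mem_span_pair.mp hQmem.1
  obtain ⟨s, t, hst⟩ := Submodule.mem_span_pair.mp hQmem.2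
  obtain ⟨rfl, rfl⟩ := hABC.coeffs_eq_of_smul_add_smul_eq hT hst.symm
  exact ⟨t, sin_angle_self_smul_add_smul hB hC hQ, sin_angle_smul_add_smul_self hB hC hQ⟩

end

theorem spherical_ceva_general
    (A B C T P Q R : EuclideanSpace ℝ (Fin 3))
    (hA : ‖A‖ = 1) (hB : ‖B‖ = 1) (hC : ‖C‖ = 1)
    (hP : ‖P‖ = 1) (hQ : ‖Q‖ = 1) (hR : ‖R‖ = 1)
    (hABC : LinearIndependent ℝ ![A, B, C])
    (hQmem : Q ∈ Submodule.span ℝ {B, C} ⊓ Submodule.span ℝ {A, T})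
    (hRmem : R ∈ Submodule.span ℝ {C, A} ⊓ Submodule.span ℝ {B, T})
    (hPmem : P ∈ Submodule.span ℝ {A, B} ⊓ Submodule.span ℝ {C, T}) :
    Real.sin (angle A P) * Real.sin (angle B Q) * Real.sin (angle C R) =
      Real.sin (angle P B) * Real.sin (angle Q C) * Real.sin (angle R A) := by
  obtain ⟨α, β, γ, hT⟩ := hABC.exists_smul_add_smul_add_smul_eq finrank_euclideanSpace_fin T
  have hBCA := hABC.rotate_fin_three
  obtain ⟨t, hBQ, hQC⟩ := exists_sin_angle_eq_of_mem_cevian hABC hT hB hC hQ hQmem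
  obtain ⟨u, hCR, hRA⟩ := exists_sin_angle_eq_of_mem_cevian hBCA
    (by rw [← hT]; abel) hC hA hR hRmem
  obtain ⟨v, hAP, hPB⟩ := exists_sin_angle_eq_of_mem_cevian hBCA.rotate_fin_three
    (by rw [← hT]; abel) hA hB hP hPmem
  rw [hAP, hBQ, hCR, hPB, hQC, hRA]
  simp only [abs_mul]
  ring

/-- **Spherical Ceva's theorem (unsigned form).**
If the great-circle cevians from the vertices `A`, `B`, `C` of a spherical triangle
through a common unit vector `T` (not lying on any side) meet the opposite sides in
the unit vectors `Q`, `R`, `P`, then the product of the sines of the spherical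
distances `∠(A,P)`, `∠(B,Q)`, `∠(C,R)` equals the product of the sines of
`∠(P,B)`, `∠(Q,C)`, `∠(R,A)`. -/
theorem spherical_ceva
    (A B C T P Q R : EuclideanSpace ℝ (Fin 3))
    (hA : ‖A‖ = 1) (hB : ‖B‖ = 1) (hC : ‖C‖ = 1) (hT : ‖T‖ = 1)
    (hP : ‖P‖ = 1) (hQ : ‖Q‖ = 1) (hR : ‖R‖ = 1)
    (hABC : LinearIndependent ℝ ![A, B, C])
    (hTAB : T ∉ Submodule.span ℝ {A, B})
    (hTBC : T ∉ Submodule.span ℝ {B, C})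
    (hTCA : T ∉ Submodule.span ℝ {C, A})
    (hQmem : Q ∈ Submodule.span ℝ {B, C} ⊓ Submodule.span ℝ {A, T})
    (hRmem : R ∈ Submodule.span ℝ {C, A} ⊓ Submodule.span ℝ {B, T})
    (hPmem : P ∈ Submodule.span ℝ {A, B} ⊓ Submodule.span ℝ {C, T})
    (hP1 : P ≠ A) (hP2 : P ≠ -A) (hP3 : P ≠ B) (hP4 : P ≠ -B)
    (hQ1 : Q ≠ B) (hQ2 : Q ≠ -B) (hQ3 : Q ≠ C) (hQ4 : Q ≠ -C)
    (hR1 : R ≠ C) (hR2 : R ≠ -C) (hR3 : R ≠ A) (hR4 : R ≠ -A) :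
    Real.sin (angle A P) * Real.sin (angle B Q) * Real.sin (angle C R) =
      Real.sin (angle P B) * Real.sin (angle Q C) * Real.sin (angle R A) :=
  spherical_ceva_general A B C T P Q R hA hB hC hP hQ hR hABC hQmem hRmem hPmem
end
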